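/- arXiv:1305.4403 — 3 statements merged into one kernel-verified Lean document; each statement's English description precedes it below -/
import Mathlib

section
/- For any P > 0, h ∈ ℝ, and σ_w² ≥ 0, the equation (P/(1 + σ_w² h²)) ξ² (1 + |h| ξ)² = 1 − ξ² has a unique root ξ₀ in (0, 1), and ξ₀ is a strictly decreasing function of P. -/
/-!
With `c = P / (1 + σ_w² h²) > 0` and `k = |h| ≥ 0` the equation reads `F(ξ) = 1` for
`F(ξ) = c (ξ (1 + k ξ))² + ξ²`, which is strictly increasing on `[0, ∞)` with `F(0) = 0` and
`F(1) > 1`; the intermediate value theorem gives exactly one root in `(0, 1)`. Since `F(ξ)` also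
increases strictly with `c` for `ξ > 0`, raising `P` moves the root to the left.
-/

open Set

namespace AWGNRelay

def relayQuartic (c k ξ : ℝ) : ℝ := c * (ξ * (1 + k * ξ)) ^ 2 + ξ ^ 2

theorem relayQuartic_eq_one_iff (c k ξ : ℝ) :
    relayQuartic c k ξ = 1 ↔ c * ξ ^ 2 * (1 + k * ξ) ^ 2 = 1 - ξ ^ 2 := by
  rw [relayQuartic, eq_sub_iff_add_eq, mul_pow, mul_assoc]

theorem strictMonoOn_mul_one_add_mul {k : ℝ} (hk : 0 ≤ k) :
    StrictMonoOn (fun ξ : ℝ => ξ * (1 + k * ξ)) (Ici 0) := by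
  intro a ha b _ hab
  have ha : 0 ≤ a := ha
  nlinarith [mul_nonneg hk (add_nonneg ha (ha.trans hab.le))]

variable {c k : ℝ}

theorem relayQuartic_strictMonoOn (hc : 0 ≤ c) (hk : 0 ≤ k) :
    StrictMonoOn (relayQuartic c k) (Ici 0) := by
  intro a ha b hb hab
  have ha : 0 ≤ a := ha
  have hab' : a * (1 + k * a) < b * (1 + k * b) := strictMonoOn_mul_one_add_mul hk ha hb hab
  have hprod : 0 ≤ a * (1 + k * a) := mul_nonneg ha (by nlinarith [mul_nonneg hk ha])
  exact add_lt_add_of_le_of_lt (mul_le_mul_of_nonneg_left (pow_le_pow_left₀ hprod hab'.le 2) hc)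
    (pow_lt_pow_left₀ hab ha two_ne_zero)

theorem relayQuartic_lt_of_lt {c₁ c₂ ξ : ℝ} (hk : 0 ≤ k) (hξ : 0 < ξ) (hc : c₁ < c₂) :
    relayQuartic c₁ k ξ < relayQuartic c₂ k ξ := by
  have hprod : 0 < ξ * (1 + k * ξ) := mul_pos hξ (by nlinarith [mul_nonneg hk hξ.le])
  unfold relayQuartic
  gcongr

theorem existsUnique_relayQuartic_eq_one (hc : 0 < c) (hk : 0 ≤ k) :
    ∃! ξ : ℝ, ξ ∈ Ioo (0 : ℝ) 1 ∧ relayQuartic c k ξ = 1 := by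
  have hcont : ContinuousOn (relayQuartic c k) (Icc 0 1) := by
    unfold relayQuartic; fun_prop
  have hF₀ : relayQuartic c k 0 = 0 := by simp [relayQuartic]
  have hF₁ : 1 < relayQuartic c k 1 := by
    have : 0 < c * (1 * (1 + k * 1)) ^ 2 := by positivity
    unfold relayQuartic; linarith
  have hmem : (1 : ℝ) ∈ Ioo (relayQuartic c k 0) (relayQuartic c k 1) := by
    rw [hF₀]; exact ⟨one_pos, hF₁⟩
  obtain ⟨ξ, hξ, hFξ⟩ := intermediate_value_Ioo zero_le_one hcont hmem
  refine ⟨ξ, ⟨hξ, hFξ⟩, fun η ⟨hη, hFη⟩ => ?_⟩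
  exact (relayQuartic_strictMonoOn hc.le hk).injOn (mem_Ici.2 hη.1.le) (mem_Ici.2 hξ.1.le)
    (hFη.trans hFξ.symm)

theorem lt_of_relayQuartic_eq_one {c₁ c₂ ξ₁ ξ₂ : ℝ} (hk : 0 ≤ k) (hc₂ : 0 ≤ c₂) (hc : c₁ < c₂)
    (hξ₁ : 0 < ξ₁) (hξ₂ : 0 ≤ ξ₂) (e₁ : relayQuartic c₁ k ξ₁ = 1)
    (e₂ : relayQuartic c₂ k ξ₂ = 1) : ξ₂ < ξ₁ := by
  have : relayQuartic c₂ k ξ₂ < relayQuartic c₂ k ξ₁ :=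
    e₂ ▸ e₁ ▸ relayQuartic_lt_of_lt hk hξ₁ hc
  exact ((relayQuartic_strictMonoOn hc₂ hk).lt_iff_lt hξ₂ hξ₁.le).1 this

end AWGNRelay

open AWGNRelay in
/-- For every `P > 0`, the quartic `(P/(1 + σ_w² h²)) ξ² (1 + |h| ξ)² = 1 - ξ²` has
exactly one root `ξ₀ ∈ (0,1)`, and that root is strictly decreasing in `P`. -/
theorem unique_root_awgn_relay_and_decreasing (h σw2 : ℝ) (hσw2 : 0 ≤ σw2) :
    (∀ P : ℝ, 0 < P →
      ∃! ξ : ℝ, ξ ∈ Set.Ioo (0 : ℝ) 1 ∧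
        (P / (1 + σw2 * h ^ 2)) * ξ ^ 2 * (1 + |h| * ξ) ^ 2 = 1 - ξ ^ 2)
    ∧ (∀ P₁ P₂ ξ₁ ξ₂ : ℝ, 0 < P₁ → P₁ < P₂ →
        ξ₁ ∈ Set.Ioo (0 : ℝ) 1 →
        (P₁ / (1 + σw2 * h ^ 2)) * ξ₁ ^ 2 * (1 + |h| * ξ₁) ^ 2 = 1 - ξ₁ ^ 2 →
        ξ₂ ∈ Set.Ioo (0 : ℝ) 1 →
        (P₂ / (1 + σw2 * h ^ 2)) * ξ₂ ^ 2 * (1 + |h| * ξ₂) ^ 2 = 1 - ξ₂ ^ 2 →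
        ξ₂ < ξ₁) := by
  have hD : 0 < 1 + σw2 * h ^ 2 := by positivity
  refine ⟨fun P hP => ?_, fun P₁ P₂ ξ₁ ξ₂ hP₁ hP hξ₁ e₁ hξ₂ e₂ => ?_⟩
  · simpa only [relayQuartic_eq_one_iff] using
      existsUnique_relayQuartic_eq_one (div_pos hP hD) (abs_nonneg h)
  · exact lt_of_relayQuartic_eq_one (abs_nonneg h) (div_pos (hP₁.trans hP) hD).le
      (div_lt_div_of_pos_right hP hD) hξ₁.1 hξ₂.1.le
      ((relayQuartic_eq_one_iff _ _ _).2 e₁) ((relayQuartic_eq_one_iff _ _ _).2 e₂)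
end

section
/- At the maximization of the post-processed SNR g₁² + (g₁(h₁ − f_{21}) + g₂)² / (1 + σ_n² f_{21}² + σ_w² h₁²) subject to g₁² ≤ ρ, g₂² + (1+σ_n²) f_{21}² ≤ ρ, and h₁² ≤ γρ/(ρ + σ_w²) (with ρ > 0, γ > 0, σ_n² > 0, σ_w² > 0), there exists a maximizer with g₁ > 0, g₂ > 0, f_{21} < 0, and h₁ > 0, and there is no maximizer with g₂ = 0, f_{21} = 0, or h₁ = 0. -/
set_option maxHeartbeats 1000000
noncomputable def rSNR (σn2 σw2 : ℝ) (g₁ g₂ f h : ℝ) : ℝ :=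
  g₁ ^ 2 + (g₁ * (h - f) + g₂) ^ 2 / (1 + σn2 * f ^ 2 + σw2 * h ^ 2)
def rFeas (ρ γ σn2 σw2 : ℝ) (g₁ g₂ f h : ℝ) : Prop :=
  g₁ ^ 2 ≤ ρ ∧ g₂ ^ 2 + (1 + σn2) * f ^ 2 ≤ ρ ∧ h ^ 2 ≤ γ * ρ / (ρ + σw2)
def rMax (ρ γ σn2 σw2 : ℝ) (g₁ g₂ f h : ℝ) : Prop :=
  rFeas ρ γ σn2 σw2 g₁ g₂ f h ∧
    ∀ g₁' g₂' f' h', rFeas ρ γ σn2 σw2 g₁' g₂' f' h' →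
      rSNR σn2 σw2 g₁' g₂' f' h' ≤ rSNR σn2 σw2 g₁ g₂ f h

lemma rmax_gt (ρ γ σn2 σw2 : ℝ) (hρ : 0 < ρ) (hγ : 0 < γ) (hσn2 : 0 < σn2)
    (hσw2 : 0 < σw2) (g₁ g₂ f h : ℝ) (hm : rMax ρ γ σn2 σw2 g₁ g₂ f h) :
    ρ < rSNR σn2 σw2 g₁ g₂ f h := by
  set H := γ * ρ / (ρ + σw2) with hHdef
  have hH0 : 0 < H := by positivity
  have hfe : rFeas ρ γ σn2 σw2 (Real.sqrt ρ) (Real.sqrt ρ) 0 (Real.sqrt H) := by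
    refine ⟨by rw [Real.sq_sqrt hρ.le], by rw [Real.sq_sqrt hρ.le]; nlinarith,
      by rw [Real.sq_sqrt hH0.le]⟩
  have hle := hm.2 _ _ _ _ hfe
  have hval : ρ < rSNR σn2 σw2 (Real.sqrt ρ) (Real.sqrt ρ) 0 (Real.sqrt H) := by
    unfold rSNR
    have h1 : (Real.sqrt ρ) ^ 2 = ρ := Real.sq_sqrt hρ.le
    have hnum : 0 < (Real.sqrt ρ * (Real.sqrt H - 0) + Real.sqrt ρ) ^ 2 := by
      have : 0 < Real.sqrt ρ * (Real.sqrt H - 0) + Real.sqrt ρ := by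
        have := Real.sqrt_pos.mpr hρ
        have := Real.sqrt_nonneg H
        nlinarith
      positivity
    have hden : 0 < 1 + σn2 * (0:ℝ) ^ 2 + σw2 * (Real.sqrt H) ^ 2 := by positivity
    have := div_pos hnum hden
    linarith
  linarith

lemma rmax_num_pos (ρ γ σn2 σw2 : ℝ) (hρ : 0 < ρ) (hγ : 0 < γ) (hσn2 : 0 < σn2)
    (hσw2 : 0 < σw2) (g₁ g₂ f h : ℝ) (hm : rMax ρ γ σn2 σw2 g₁ g₂ f h) :
    g₁ ≠ 0 ∧ 0 < (g₁ * (h - f) + g₂) ^ 2 := by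
  have hgt := rmax_gt ρ γ σn2 σw2 hρ hγ hσn2 hσw2 g₁ g₂ f h hm
  unfold rSNR at hgt
  have hden : 0 < 1 + σn2 * f ^ 2 + σw2 * h ^ 2 := by positivity
  have hg1 : g₁ ^ 2 ≤ ρ := hm.1.1
  have hnum : 0 < (g₁ * (h - f) + g₂) ^ 2 := by
    by_contra hc
    push_neg at hc
    have : (g₁ * (h - f) + g₂) ^ 2 = 0 := le_antisymm hc (sq_nonneg _)
    rw [this, zero_div] at hgt
    linarith
  refine ⟨?_, hnum⟩
  rintro rfl
  have hg2 : g₂ ^ 2 ≤ ρ := by nlinarith [hm.1.2.1, sq_nonneg f, hσn2.le]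
  have hden1 : 1 ≤ 1 + σn2 * f ^ 2 + σw2 * h ^ 2 := by nlinarith [sq_nonneg f, sq_nonneg h, mul_nonneg hσn2.le (sq_nonneg f), mul_nonneg hσw2.le (sq_nonneg h)]
  have : (0 * (h - f) + g₂) ^ 2 / (1 + σn2 * f ^ 2 + σw2 * h ^ 2) ≤ g₂ ^ 2 := by
    have : (0 * (h - f) + g₂) ^ 2 = g₂ ^ 2 := by ring
    rw [this]
    exact div_le_self (sq_nonneg _) hden1
  linarith

lemma rden_pos (σn2 σw2 : ℝ) (hσn2 : 0 < σn2) (hσw2 : 0 < σw2) (f h : ℝ) :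
    0 < 1 + σn2 * f ^ 2 + σw2 * h ^ 2 := by
  nlinarith [mul_nonneg hσn2.le (sq_nonneg f), mul_nonneg hσw2.le (sq_nonneg h)]

lemma rmax_flips (ρ γ σn2 σw2 : ℝ) (hσn2 : 0 < σn2) (hσw2 : 0 < σw2)
    (g₁ g₂ f h : ℝ) (hm : rMax ρ γ σn2 σw2 g₁ g₂ f h) :
    g₁ * f * (g₁ * h + g₂) ≤ 0 ∧ 0 ≤ g₁ * h * (g₂ - g₁ * f) ∧
      0 ≤ g₁ * (h - f) * g₂ := by
  obtain ⟨⟨h1, h2, h3⟩, hmax⟩ := hm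
  have hD : 0 < 1 + σn2 * f ^ 2 + σw2 * h ^ 2 := rden_pos σn2 σw2 hσn2 hσw2 f h
  have key : ∀ g₂' f' h' : ℝ, g₂' ^ 2 = g₂ ^ 2 → f' ^ 2 = f ^ 2 → h' ^ 2 = h ^ 2 →
      (g₁ * (h' - f') + g₂') ^ 2 ≤ (g₁ * (h - f) + g₂) ^ 2 := by
    intro g₂' f' hh e2 ef eh
    have hfe : rFeas ρ γ σn2 σw2 g₁ g₂' f' hh := ⟨h1, by rw [e2, ef]; exact h2, by rw [eh]; exact h3⟩
    have hle := hmax g₁ g₂' f' hh hfe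
    unfold rSNR at hle
    rw [ef, eh] at hle
    have hle2 : (g₁ * (hh - f') + g₂') ^ 2 / (1 + σn2 * f ^ 2 + σw2 * h ^ 2) ≤
        (g₁ * (h - f) + g₂) ^ 2 / (1 + σn2 * f ^ 2 + σw2 * h ^ 2) := by linarith
    exact (div_le_div_iff_of_pos_right hD).mp hle2
  refine ⟨?_, ?_, ?_⟩
  · have := key g₂ (-f) h rfl (by ring) rfl
    nlinarith
  · have := key g₂ f (-h) rfl rfl (by ring)
    nlinarith
  · have := key (-g₂) f h (by ring) rfl rfl
    nlinarith

lemma rmax_flip_sign (ρ γ σn2 σw2 : ℝ) (g₁ g₂ f h : ℝ)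
    (hm : rMax ρ γ σn2 σw2 g₁ g₂ f h) :
    rMax ρ γ σn2 σw2 (-g₁) (-g₂) f h ∧ rMax ρ γ σn2 σw2 g₁ (-g₂) (-f) (-h) := by
  obtain ⟨⟨h1, h2, h3⟩, hmax⟩ := hm
  have e1 : rSNR σn2 σw2 (-g₁) (-g₂) f h = rSNR σn2 σw2 g₁ g₂ f h := by
    unfold rSNR; ring
  have e2 : rSNR σn2 σw2 g₁ (-g₂) (-f) (-h) = rSNR σn2 σw2 g₁ g₂ f h := by
    unfold rSNR; ring
  constructor
  · exact ⟨⟨by simpa using h1, by simpa using h2, h3⟩,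
      fun a b c d hf => by rw [e1]; exact hmax a b c d hf⟩
  · exact ⟨⟨h1, by simpa using h2, by simpa using h3⟩,
      fun a b c d hf => by rw [e2]; exact hmax a b c d hf⟩

lemma rmax_fh_neg (ρ γ σn2 σw2 : ℝ) (hσn2 : 0 < σn2) (hσw2 : 0 < σw2)
    (g₁ g₂ f h : ℝ) (hm : rMax ρ γ σn2 σw2 g₁ g₂ f h)
    (hg₁ : g₁ ≠ 0) (hf : f ≠ 0) (hh : h ≠ 0) : f * h < 0 := by
  obtain ⟨hA, hB, _⟩ := rmax_flips ρ γ σn2 σw2 hσn2 hσw2 g₁ g₂ f h hm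
  rcases lt_or_gt_of_ne hf with hf' | hf' <;>
    rcases lt_or_gt_of_ne hh with hh' | hh' <;>
    rcases lt_or_gt_of_ne hg₁ with hg' | hg'
  case' inl.inl.inl => exfalso  -- f<0 h<0 g₁<0 : x>0 y>0
  case' inl.inl.inr => exfalso  -- f<0 h<0 g₁>0 : x<0 y<0
  case' inr.inr.inl => exfalso  -- f>0 h>0 g₁<0 : x<0 y<0
  case' inr.inr.inr => exfalso  -- f>0 h>0 g₁>0 : x>0 y>0
  all_goals first
    | nlinarith
    | · -- x>0, y>0 case
        have hx : 0 < g₁ * f := by nlinarith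
        have hy : 0 < g₁ * h := by nlinarith
        have e1 : g₁ * h + g₂ ≤ 0 := by nlinarith
        have e2 : g₁ * f ≤ g₂ := by nlinarith
        nlinarith
    | · -- x<0, y<0 case
        have hx : g₁ * f < 0 := by nlinarith
        have hy : g₁ * h < 0 := by nlinarith
        have e1 : 0 ≤ g₁ * h + g₂ := by nlinarith
        have e2 : g₂ ≤ g₁ * f := by nlinarith
        nlinarith

lemma rmax_h_ne (ρ γ σn2 σw2 : ℝ) (hρ : 0 < ρ) (hγ : 0 < γ) (hσn2 : 0 < σn2)
    (hσw2 : 0 < σw2) (g₁ g₂ f h : ℝ) (hm : rMax ρ γ σn2 σw2 g₁ g₂ f h) : h ≠ 0 := by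
  intro hh
  obtain ⟨hg1ne, hnum⟩ := rmax_num_pos ρ γ σn2 σw2 hρ hγ hσn2 hσw2 g₁ g₂ f h hm
  subst hh
  obtain ⟨⟨h1, h2, h3⟩, hmax⟩ := hm
  have hH0 : 0 < γ * ρ / (ρ + σw2) := by positivity
  have hNne : g₁ * ((0:ℝ) - f) + g₂ ≠ 0 := by
    intro h0; rw [h0] at hnum; simp at hnum
  set N := g₁ * ((0:ℝ) - f) + g₂ with hNdef
  obtain ⟨s, hs2, hP⟩ : ∃ s : ℝ, s ^ 2 = 1 ∧ 0 < s * (g₁ * N) := by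
    rcases (mul_ne_zero hg1ne hNne).lt_or_gt with hlt | hlt
    · exact ⟨-1, by norm_num, by rw [hNdef] at hlt ⊢; nlinarith⟩
    · exact ⟨1, by norm_num, by rw [hNdef] at hlt ⊢; nlinarith⟩
  have hNsq : 0 < N ^ 2 := by positivity
  obtain ⟨δ, hδ0, hδH, hδP⟩ : ∃ δ : ℝ, 0 < δ ∧ δ ^ 2 ≤ γ * ρ / (ρ + σw2) ∧
      N ^ 2 * σw2 * δ ≤ s * (g₁ * N) := by
    refine ⟨min (Real.sqrt (γ * ρ / (ρ + σw2))) (s * (g₁ * N) / (N ^ 2 * σw2)),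
      lt_min (Real.sqrt_pos.mpr hH0) (by positivity), ?_, ?_⟩
    · have h1 := min_le_left (Real.sqrt (γ * ρ / (ρ + σw2))) (s * (g₁ * N) / (N ^ 2 * σw2))
      have h0 : (0:ℝ) ≤ min (Real.sqrt (γ * ρ / (ρ + σw2))) (s * (g₁ * N) / (N ^ 2 * σw2)) :=
        (lt_min (Real.sqrt_pos.mpr hH0) (by positivity)).le
      nlinarith [Real.sq_sqrt hH0.le, Real.sqrt_nonneg (γ * ρ / (ρ + σw2))]
    · have h1 := min_le_right (Real.sqrt (γ * ρ / (ρ + σw2))) (s * (g₁ * N) / (N ^ 2 * σw2))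
      have hpos : 0 < N ^ 2 * σw2 := by positivity
      calc N ^ 2 * σw2 * min _ _ ≤ N ^ 2 * σw2 * (s * (g₁ * N) / (N ^ 2 * σw2)) :=
            mul_le_mul_of_nonneg_left h1 hpos.le
        _ = s * (g₁ * N) := by field_simp
  have hfe : rFeas ρ γ σn2 σw2 g₁ g₂ f (δ * s) := by
    refine ⟨h1, h2, ?_⟩
    have e : (δ * s) ^ 2 = δ ^ 2 := by rw [mul_pow, hs2, mul_one]
    rw [e]; exact hδH
  have hle := hmax g₁ g₂ f (δ * s) hfe
  unfold rSNR at hle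
  rw [← hNdef] at hle
  have hDpos : 0 < 1 + σn2 * f ^ 2 + σw2 * (0:ℝ) ^ 2 := rden_pos σn2 σw2 hσn2 hσw2 f 0
  have hDpos' : 0 < 1 + σn2 * f ^ 2 + σw2 * (δ * s) ^ 2 := rden_pos σn2 σw2 hσn2 hσw2 f (δ * s)
  have hkey : N ^ 2 / (1 + σn2 * f ^ 2 + σw2 * (0:ℝ) ^ 2) <
      (g₁ * (δ * s - f) + g₂) ^ 2 / (1 + σn2 * f ^ 2 + σw2 * (δ * s) ^ 2) := by
    rw [div_lt_div_iff₀ hDpos hDpos']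
    have e1 : g₁ * (δ * s - f) + g₂ = N + g₁ * δ * s := by rw [hNdef]; ring
    have e3 : (δ * s) ^ 2 = δ ^ 2 := by rw [mul_pow, hs2, mul_one]
    rw [e1, e3]
    have hD1 : 0 ≤ σn2 * f ^ 2 := mul_nonneg hσn2.le (sq_nonneg f)
    have s1 : N ^ 2 * σw2 * δ ^ 2 < 2 * δ * (s * (g₁ * N)) := by
      nlinarith [mul_le_mul_of_nonneg_right hδP hδ0.le, mul_pos hδ0 hP]
    have s2 : N ^ 2 + 2 * δ * (s * (g₁ * N)) ≤ (N + g₁ * δ * s) ^ 2 := by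
      nlinarith [sq_nonneg (g₁ * s * δ)]
    have s3 : 0 ≤ 2 * δ * (s * (g₁ * N)) := by nlinarith [mul_pos hδ0 hP]
    have t1 := mul_le_mul_of_nonneg_right s2 (by linarith : (0:ℝ) ≤ 1 + σn2 * f ^ 2)
    have t2 : 0 ≤ (σn2 * f ^ 2) * (2 * δ * (s * (g₁ * N))) := mul_nonneg hD1 s3
    nlinarith [t1, t2, s1]
  linarith

lemma rmax_g2_ne (ρ γ σn2 σw2 : ℝ) (hρ : 0 < ρ) (hγ : 0 < γ) (hσn2 : 0 < σn2)
    (hσw2 : 0 < σw2) (g₁ g₂ f h : ℝ) (hm : rMax ρ γ σn2 σw2 g₁ g₂ f h) : g₂ ≠ 0 := by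
  intro hg2
  obtain ⟨hg1ne, hnum⟩ := rmax_num_pos ρ γ σn2 σw2 hρ hγ hσn2 hσw2 g₁ g₂ f h hm
  subst hg2
  obtain ⟨⟨h1, h2, h3⟩, hmax⟩ := hm
  have hR0 : 0 < Real.sqrt ρ := Real.sqrt_pos.mpr hρ
  have hR2 : (Real.sqrt ρ) ^ 2 = ρ := Real.sq_sqrt hρ.le
  have h2' : (1 + σn2) * f ^ 2 ≤ ρ := by nlinarith [h2]
  have hNne : g₁ * (h - f) + 0 ≠ 0 := by
    intro h0; rw [h0] at hnum; simp at hnum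
  -- choose ε
  obtain ⟨ε, hε0, hε1, hεc⟩ : ∃ ε : ℝ, 0 < ε ∧ ε ≤ 1 ∧ |g₁ * f| * ε < Real.sqrt ρ := by
    refine ⟨min 1 (Real.sqrt ρ / (|g₁ * f| + 1)), lt_min one_pos (by positivity),
      min_le_left _ _, ?_⟩
    have hc0 : 0 ≤ |g₁ * f| := abs_nonneg _
    have hmr := min_le_right (1:ℝ) (Real.sqrt ρ / (|g₁ * f| + 1))
    have hm0 : 0 < min (1:ℝ) (Real.sqrt ρ / (|g₁ * f| + 1)) := lt_min one_pos (by positivity)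
    have key : min (1:ℝ) (Real.sqrt ρ / (|g₁ * f| + 1)) * (|g₁ * f| + 1) ≤ Real.sqrt ρ := by
      rw [← le_div_iff₀ (by positivity)]
      exact hmr
    nlinarith [mul_pos hm0 (by positivity : (0:ℝ) < |g₁ * f| + 1)]
  -- choose t
  obtain ⟨t, ht0, ht1, ht2, h1t⟩ : ∃ t : ℝ, 0 ≤ t ∧ t ≤ 1 ∧ t ^ 2 = 1 - ε ^ 2 ∧
      1 - t ≤ ε ^ 2 := by
    have he1 : 0 ≤ 1 - ε ^ 2 := by nlinarith
    refine ⟨Real.sqrt (1 - ε ^ 2), Real.sqrt_nonneg _, ?_, Real.sq_sqrt he1, ?_⟩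
    · have := Real.sqrt_le_sqrt (show 1 - ε ^ 2 ≤ 1 by nlinarith)
      rwa [Real.sqrt_one] at this
    · nlinarith [Real.sq_sqrt he1, Real.sqrt_nonneg (1 - ε ^ 2),
        Real.sqrt_le_sqrt (show 1 - ε ^ 2 ≤ 1 by nlinarith), Real.sqrt_one]
  set A := g₁ * (h - t * f) with hAdef
  set N := g₁ * (h - f) + 0 with hNdef
  -- choose s
  obtain ⟨s, hs2, hsA⟩ : ∃ s : ℝ, s ^ 2 = 1 ∧ s * A = |A| := by
    rcases le_or_gt 0 A with hA | hA
    · exact ⟨1, by norm_num, by rw [one_mul, abs_of_nonneg hA]⟩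
    · exact ⟨-1, by norm_num, by rw [abs_of_neg hA]; ring⟩
  -- feasibility of perturbed point
  have hfe : rFeas ρ γ σn2 σw2 g₁ (s * (ε * Real.sqrt ρ)) (t * f) h := by
    refine ⟨h1, ?_, h3⟩
    have e : (s * (ε * Real.sqrt ρ)) ^ 2 = ε ^ 2 * ρ := by
      rw [mul_pow, hs2, one_mul, mul_pow, hR2]
    have e2 : (t * f) ^ 2 = (1 - ε ^ 2) * f ^ 2 := by rw [mul_pow, ht2]
    rw [e, e2]
    nlinarith [mul_le_mul_of_nonneg_left h2' (by nlinarith : (0:ℝ) ≤ 1 - ε ^ 2)]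
  have hle := hmax g₁ (s * (ε * Real.sqrt ρ)) (t * f) h hfe
  unfold rSNR at hle
  rw [← hAdef, ← hNdef] at hle
  -- key strict inequality
  have hDpos : 0 < 1 + σn2 * f ^ 2 + σw2 * h ^ 2 := rden_pos σn2 σw2 hσn2 hσw2 f h
  have hDpos' : 0 < 1 + σn2 * (t * f) ^ 2 + σw2 * h ^ 2 := rden_pos σn2 σw2 hσn2 hσw2 (t * f) h
  have hDle : 1 + σn2 * (t * f) ^ 2 + σw2 * h ^ 2 ≤ 1 + σn2 * f ^ 2 + σw2 * h ^ 2 := by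
    have : (t * f) ^ 2 ≤ f ^ 2 := by nlinarith [sq_nonneg f, sq_nonneg (t * f)]
    nlinarith [mul_le_mul_of_nonneg_left this hσn2.le]
  have hNpos : 0 < |N| := abs_pos.mpr hNne
  set B := |N| + ε * Real.sqrt ρ - |g₁ * f| * ε ^ 2 with hBdef
  have hNB : |N| < B := by
    have : |g₁ * f| * ε ^ 2 < Real.sqrt ρ * ε := by
      nlinarith [mul_lt_mul_of_pos_right hεc hε0]
    rw [hBdef]; nlinarith
  have hB0 : 0 ≤ B := by linarith
  have hAB : B ≤ |A| + ε * Real.sqrt ρ := by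
    have habs1 : |N| - |A| ≤ |N - A| := abs_sub_abs_le_abs_sub N A
    have heq : N - A = -(g₁ * f * (1 - t)) := by rw [hNdef, hAdef]; ring
    have heq2 : |N - A| = |g₁ * f| * (1 - t) := by
      rw [heq, abs_neg, abs_mul, abs_of_nonneg (by linarith : (0:ℝ) ≤ 1 - t)]
    have hb : |g₁ * f| * (1 - t) ≤ |g₁ * f| * ε ^ 2 :=
      mul_le_mul_of_nonneg_left h1t (abs_nonneg _)
    rw [hBdef]; linarith [habs1, heq2 ▸ habs1]
  have eqnum : (A + s * (ε * Real.sqrt ρ)) ^ 2 = (|A| + ε * Real.sqrt ρ) ^ 2 := by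
    linear_combination 2 * ε * Real.sqrt ρ * hsA + ε ^ 2 * (Real.sqrt ρ) ^ 2 * hs2 - sq_abs A
  have hkey : N ^ 2 / (1 + σn2 * f ^ 2 + σw2 * h ^ 2) <
      (A + s * (ε * Real.sqrt ρ)) ^ 2 / (1 + σn2 * (t * f) ^ 2 + σw2 * h ^ 2) := by
    have c1 : N ^ 2 < B ^ 2 := by nlinarith [abs_nonneg N, sq_abs N]
    have c2 : B ^ 2 ≤ (A + s * (ε * Real.sqrt ρ)) ^ 2 := by
      rw [eqnum]; exact pow_le_pow_left₀ hB0 hAB 2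
    calc N ^ 2 / (1 + σn2 * f ^ 2 + σw2 * h ^ 2)
        < B ^ 2 / (1 + σn2 * f ^ 2 + σw2 * h ^ 2) := by
          exact div_lt_div_of_pos_right c1 hDpos
      _ ≤ B ^ 2 / (1 + σn2 * (t * f) ^ 2 + σw2 * h ^ 2) :=
          div_le_div_of_nonneg_left (sq_nonneg B) hDpos' hDle
      _ ≤ (A + s * (ε * Real.sqrt ρ)) ^ 2 / (1 + σn2 * (t * f) ^ 2 + σw2 * h ^ 2) := by
          exact div_le_div_of_nonneg_right c2 hDpos'.le
  have hexp : g₁ * (h - t * f) + s * (ε * Real.sqrt ρ) = A + s * (ε * Real.sqrt ρ) := by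
    rw [hAdef]
  linarith [hle, hkey]

lemma abs_add_of_mul_nonneg (a b : ℝ) (hab : 0 ≤ a * b) : |a + b| = |a| + |b| := by
  rcases le_or_gt 0 a with ha | ha <;> rcases le_or_gt 0 b with hb | hb
  · rw [abs_of_nonneg ha, abs_of_nonneg hb, abs_of_nonneg (by linarith)]
  · have ha0 : a = 0 := by nlinarith
    subst ha0; simp
  · have hb0 : b = 0 := by nlinarith
    subst hb0; simp
  · rw [abs_of_neg ha, abs_of_neg hb, abs_of_neg (by linarith)]; ring


lemma pert_ineq (n e w q : ℝ) (hn : 0 ≤ n) (he : 0 ≤ e) (hw : 0 ≤ w)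
    (h2 : q < 2 * n * e) : n ^ 2 * (1 + w) + q < (n + e) ^ 2 * (1 + w) := by
  nlinarith [mul_nonneg hw (mul_nonneg (mul_nonneg (by norm_num : (0:ℝ) ≤ 2) hn) he),
    mul_nonneg hw (sq_nonneg e), sq_nonneg e]

lemma fkey_all (σn2 W c δ N E B X g1abs : ℝ)
    (hσn2 : 0 < σn2) (hW : 0 ≤ W) (hδ0 : 0 < δ)
    (hNpos : 0 < |N|) (hg1pos : 0 < g1abs) (hc0 : 0 < c)
    (d3 : δ * (2 * |N| * c + N ^ 2 * σn2) ≤ |N| * g1abs)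
    (hEdef : E = g1abs * δ - c * δ ^ 2) (hE0 : 0 ≤ E)
    (hBdef : B = |N| + E) (hBsq : B ^ 2 ≤ X ^ 2) :
    N ^ 2 * (1 + σn2 * δ ^ 2 + W) < X ^ 2 * (1 + σn2 * (0:ℝ) ^ 2 + W) := by
  have key1 : δ ^ 2 * (2 * |N| * c + N ^ 2 * σn2) ≤ |N| * g1abs * δ := by
    have := mul_le_mul_of_nonneg_right d3 hδ0.le
    nlinarith [this]
  have key2 : 0 < |N| * g1abs * δ := by positivity
  have goal2 : N ^ 2 * σn2 * δ ^ 2 < 2 * |N| * E := by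
    rw [hEdef]; nlinarith [key1, key2]
  have main := pert_ineq |N| E W (N ^ 2 * σn2 * δ ^ 2) (abs_nonneg N) hE0 hW goal2
  rw [← hBdef, sq_abs] at main
  have step : N ^ 2 * (1 + σn2 * δ ^ 2 + W) < B ^ 2 * (1 + σn2 * (0:ℝ) ^ 2 + W) := by
    nlinarith [main]
  have hD0 : (0:ℝ) ≤ 1 + σn2 * (0:ℝ) ^ 2 + W := by nlinarith [hW]
  have step2 : B ^ 2 * (1 + σn2 * (0:ℝ) ^ 2 + W) ≤ X ^ 2 * (1 + σn2 * (0:ℝ) ^ 2 + W) :=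
    mul_le_mul_of_nonneg_right hBsq hD0
  linarith [step, step2]

lemma rmax_f_ne (ρ γ σn2 σw2 : ℝ) (hρ : 0 < ρ) (hγ : 0 < γ) (hσn2 : 0 < σn2)
    (hσw2 : 0 < σw2) (g₁ g₂ f h : ℝ) (hm : rMax ρ γ σn2 σw2 g₁ g₂ f h) : f ≠ 0 := by
  intro hf
  obtain ⟨hg1ne, hnum⟩ := rmax_num_pos ρ γ σn2 σw2 hρ hγ hσn2 hσw2 g₁ g₂ f h hm
  have hg2ne : g₂ ≠ 0 := rmax_g2_ne ρ γ σn2 σw2 hρ hγ hσn2 hσw2 g₁ g₂ f h hm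
  subst hf
  obtain ⟨⟨h1, h2, h3⟩, hmax⟩ := hm
  obtain ⟨N, hNdef⟩ : ∃ x : ℝ, x = g₁ * (h - 0) + g₂ := ⟨_, rfl⟩
  have hNne : N ≠ 0 := by
    intro h0; rw [h0] at hNdef; rw [← hNdef] at hnum; simp at hnum
  have hNpos : 0 < |N| := abs_pos.mpr hNne
  have hg1pos : 0 < |g₁| := abs_pos.mpr hg1ne
  have hg2pos : 0 < |g₂| := abs_pos.mpr hg2ne
  obtain ⟨c, hcdef⟩ : ∃ x : ℝ, x = (1 + σn2) / |g₂| := ⟨_, rfl⟩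
  have hc0 : 0 < c := by rw [hcdef]; positivity
  have hcg2 : c * |g₂| = 1 + σn2 := by rw [hcdef]; field_simp
  have heabs : |g₂| * |g₂| = g₂ ^ 2 := by
    rw [← abs_mul, ← sq, abs_of_nonneg (sq_nonneg g₂)]
  -- choose δ
  obtain ⟨δ, hδ0, d1, d2, d3⟩ : ∃ δ : ℝ, 0 < δ ∧ (1 + σn2) * δ ^ 2 ≤ g₂ ^ 2 ∧
      c * δ ≤ |g₁| ∧ δ * (2 * |N| * c + N ^ 2 * σn2) ≤ |N| * |g₁| := by
    have hNsq : 0 < N ^ 2 := by positivity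
    have hden3 : 0 < 2 * |N| * c + N ^ 2 * σn2 := by positivity
    have hs1 : (0:ℝ) < Real.sqrt (1 + σn2) := Real.sqrt_pos.mpr (by linarith)
    have hsq1 : (Real.sqrt (1 + σn2)) ^ 2 = 1 + σn2 := Real.sq_sqrt (by linarith)
    refine ⟨min (min (|g₂| / Real.sqrt (1 + σn2)) (|g₁| / c))
      (|N| * |g₁| / (2 * |N| * c + N ^ 2 * σn2)),
      lt_min (lt_min (by positivity) (by positivity)) (by positivity), ?_, ?_, ?_⟩
    · have hle : min (min (|g₂| / Real.sqrt (1 + σn2)) (|g₁| / c))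
          (|N| * |g₁| / (2 * |N| * c + N ^ 2 * σn2)) ≤ |g₂| / Real.sqrt (1 + σn2) :=
        le_trans (min_le_left _ _) (min_le_left _ _)
      have h0 : (0:ℝ) ≤ min (min (|g₂| / Real.sqrt (1 + σn2)) (|g₁| / c))
          (|N| * |g₁| / (2 * |N| * c + N ^ 2 * σn2)) :=
        (lt_min (lt_min (by positivity) (by positivity)) (by positivity)).le
      have key := mul_le_mul hle hle h0 (by positivity)
      have e : |g₂| / Real.sqrt (1 + σn2) * (|g₂| / Real.sqrt (1 + σn2)) =
          g₂ ^ 2 / (1 + σn2) := by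
        rw [div_mul_div_comm, heabs, ← sq, hsq1]
      rw [e, ← sq, le_div_iff₀ (by linarith : (0:ℝ) < 1 + σn2)] at key
      linarith [key]
    · have hle : min (min (|g₂| / Real.sqrt (1 + σn2)) (|g₁| / c))
          (|N| * |g₁| / (2 * |N| * c + N ^ 2 * σn2)) ≤ |g₁| / c :=
        le_trans (min_le_left _ _) (min_le_right _ _)
      rw [le_div_iff₀ hc0] at hle
      linarith [hle]
    · have hle : min (min (|g₂| / Real.sqrt (1 + σn2)) (|g₁| / c))
          (|N| * |g₁| / (2 * |N| * c + N ^ 2 * σn2)) ≤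
          |N| * |g₁| / (2 * |N| * c + N ^ 2 * σn2) := min_le_right _ _
      rw [le_div_iff₀ hden3] at hle
      linarith [hle]
  -- choose t
  obtain ⟨t, ht0, ht1, ht2⟩ : ∃ t : ℝ, 0 ≤ t ∧ t ≤ 1 ∧
      t ^ 2 * g₂ ^ 2 = g₂ ^ 2 - (1 + σn2) * δ ^ 2 := by
    have hg2sq : 0 < g₂ ^ 2 := by positivity
    have harg : 0 ≤ 1 - (1 + σn2) * δ ^ 2 / g₂ ^ 2 := by
      rw [sub_nonneg, div_le_one hg2sq]; exact d1
    refine ⟨Real.sqrt (1 - (1 + σn2) * δ ^ 2 / g₂ ^ 2), Real.sqrt_nonneg _, ?_, ?_⟩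
    · have := Real.sqrt_le_sqrt (show 1 - (1 + σn2) * δ ^ 2 / g₂ ^ 2 ≤ 1 by
        have : 0 ≤ (1 + σn2) * δ ^ 2 / g₂ ^ 2 := by positivity
        linarith)
      rwa [Real.sqrt_one] at this
    · rw [Real.sq_sqrt harg]; field_simp
  -- bound on 1 - t
  have h1t : (1 - t) * |g₂| ≤ c * δ ^ 2 := by
    have e1 : (1 - t ^ 2) * g₂ ^ 2 = (1 + σn2) * δ ^ 2 := by linear_combination -ht2
    have htt : t ^ 2 ≤ t := by
      have := mul_le_mul_of_nonneg_left ht1 ht0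
      rw [mul_one] at this
      calc t ^ 2 = t * t := sq t
        _ ≤ t := this
    have h1 : (1 - t) * g₂ ^ 2 ≤ (1 + σn2) * δ ^ 2 := by
      rw [← e1]
      exact mul_le_mul_of_nonneg_right (by linarith) (sq_nonneg g₂)
    have key : ((1 - t) * |g₂|) * |g₂| ≤ (c * δ ^ 2) * |g₂| := by
      have r1 : ((1 - t) * |g₂|) * |g₂| = (1 - t) * g₂ ^ 2 := by
        rw [mul_assoc, heabs]
      have r2 : (c * δ ^ 2) * |g₂| = (1 + σn2) * δ ^ 2 := by
        rw [show (c * δ ^ 2) * |g₂| = (c * |g₂|) * δ ^ 2 by ring, hcg2]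
      rw [r1, r2]; exact h1
    exact le_of_mul_le_mul_right key hg2pos
  -- choose s
  obtain ⟨s, hs2, hsabs, hsg⟩ : ∃ s : ℝ, s ^ 2 = 1 ∧ |s| = 1 ∧ s * (g₁ * N) ≤ 0 := by
    rcases le_or_gt 0 (g₁ * N) with hgN | hgN
    · exact ⟨-1, by norm_num, by norm_num, by simpa using hgN⟩
    · refine ⟨1, by norm_num, by norm_num, by rw [one_mul]; exact hgN.le⟩
  -- feasibility
  have hδs2 : (δ * s) ^ 2 = δ ^ 2 := by rw [mul_pow, hs2, mul_one]
  have hfe : rFeas ρ γ σn2 σw2 g₁ (t * g₂) (δ * s) h := by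
    refine ⟨h1, ?_, h3⟩
    have e : (t * g₂) ^ 2 + (1 + σn2) * (δ * s) ^ 2 = g₂ ^ 2 := by
      rw [hδs2, mul_pow, ht2]; ring
    have e2 : g₂ ^ 2 + (1 + σn2) * (0:ℝ) ^ 2 = g₂ ^ 2 := by ring
    rw [e]; rw [e2] at h2; exact h2
  have hle := hmax g₁ (t * g₂) (δ * s) h hfe
  unfold rSNR at hle
  rw [← hNdef] at hle
  -- abbreviations
  obtain ⟨u, hudef⟩ : ∃ x : ℝ, x = -(g₁ * δ * s) := ⟨_, rfl⟩
  obtain ⟨v, hvdef⟩ : ∃ x : ℝ, x = (1 - t) * g₂ := ⟨_, rfl⟩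
  have hXeq : g₁ * (h - δ * s) + t * g₂ = N + u - v := by
    rw [hNdef, hudef, hvdef]; ring
  rw [hXeq] at hle
  have huabs : |u| = |g₁| * δ := by
    rw [hudef, abs_neg, abs_mul, abs_mul, hsabs, mul_one, abs_of_pos hδ0]
  have huN : 0 ≤ N * u := by
    have e : N * u = (-δ) * (s * (g₁ * N)) := by rw [hudef]; ring
    rw [e]
    exact mul_nonneg_of_nonpos_of_nonpos (by linarith : -δ ≤ (0:ℝ)) hsg
  have hNu : |N + u| = |N| + |g₁| * δ := by
    rw [abs_add_of_mul_nonneg N u huN, huabs]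
  have hvabs : |v| ≤ c * δ ^ 2 := by
    rw [hvdef, abs_mul, abs_of_nonneg (by linarith : (0:ℝ) ≤ 1 - t)]
    exact h1t
  obtain ⟨E, hEdef⟩ : ∃ x : ℝ, x = |g₁| * δ - c * δ ^ 2 := ⟨_, rfl⟩
  have hE0 : 0 ≤ E := by
    have e : c * δ * δ ≤ |g₁| * δ := mul_le_mul_of_nonneg_right d2 hδ0.le
    have e2 : c * δ ^ 2 = c * δ * δ := by ring
    rw [hEdef, e2]; linarith [e]
  obtain ⟨B, hBdef⟩ : ∃ x : ℝ, x = |N| + E := ⟨_, rfl⟩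
  have hB0 : 0 ≤ B := by rw [hBdef]; linarith
  have hBX : B ≤ |N + u - v| := by
    have habs1 : |N + u| - |v| ≤ |N + u - v| := by
      have := abs_sub_abs_le_abs_sub (N + u) v
      simpa using this
    rw [hBdef, hEdef]; rw [hNu] at habs1; linarith
  have hBsq : B ^ 2 ≤ (N + u - v) ^ 2 := by
    rw [← sq_abs (N + u - v)]; exact pow_le_pow_left₀ hB0 hBX 2
  -- key inequality
  have hDpos : 0 < 1 + σn2 * (0:ℝ) ^ 2 + σw2 * h ^ 2 := rden_pos σn2 σw2 hσn2 hσw2 0 h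
  have hDpos' : 0 < 1 + σn2 * (δ * s) ^ 2 + σw2 * h ^ 2 := rden_pos σn2 σw2 hσn2 hσw2 (δ * s) h
  have hkey : N ^ 2 / (1 + σn2 * (0:ℝ) ^ 2 + σw2 * h ^ 2) <
      (N + u - v) ^ 2 / (1 + σn2 * (δ * s) ^ 2 + σw2 * h ^ 2) := by
    rw [div_lt_div_iff₀ hDpos hDpos', hδs2]
    exact fkey_all σn2 (σw2 * h ^ 2) c δ N E B (N + u - v) |g₁| hσn2
      (mul_nonneg hσw2.le (sq_nonneg h)) hδ0 hNpos hg1pos hc0 d3 hEdef hE0 hBdef hBsq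
  linarith [hle, hkey]

lemma exists_rmax (ρ γ σn2 σw2 : ℝ) (hρ : 0 < ρ) (hγ : 0 < γ) (hσn2 : 0 < σn2)
    (hσw2 : 0 < σw2) : ∃ g₁ g₂ f h, rMax ρ γ σn2 σw2 g₁ g₂ f h := by
  have hH0 : 0 ≤ γ * ρ / (ρ + σw2) := by positivity
  set K : Set (ℝ × ℝ × ℝ × ℝ) :=
    {p | rFeas ρ γ σn2 σw2 p.1 p.2.1 p.2.2.1 p.2.2.2} with hK
  have hKcl : IsClosed K := by
    have : K = {p : ℝ × ℝ × ℝ × ℝ | p.1 ^ 2 ≤ ρ} ∩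
        ({p | p.2.1 ^ 2 + (1 + σn2) * p.2.2.1 ^ 2 ≤ ρ} ∩
         {p | p.2.2.2 ^ 2 ≤ γ * ρ / (ρ + σw2)}) := rfl
    rw [this]
    exact (isClosed_le (by fun_prop) continuous_const).inter
      ((isClosed_le (by fun_prop) continuous_const).inter
        (isClosed_le (by fun_prop) continuous_const))
  have hbox : IsCompact ((Set.Icc (-Real.sqrt ρ) (Real.sqrt ρ)) ×ˢ
      ((Set.Icc (-Real.sqrt ρ) (Real.sqrt ρ)) ×ˢ
       ((Set.Icc (-Real.sqrt ρ) (Real.sqrt ρ)) ×ˢ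
        (Set.Icc (-Real.sqrt (γ * ρ / (ρ + σw2))) (Real.sqrt (γ * ρ / (ρ + σw2))))))) :=
    isCompact_Icc.prod (isCompact_Icc.prod (isCompact_Icc.prod isCompact_Icc))
  have habs : ∀ x c : ℝ, x ^ 2 ≤ c → x ∈ Set.Icc (-Real.sqrt c) (Real.sqrt c) := by
    intro x c hx
    have := Real.sqrt_le_sqrt hx
    rw [Real.sqrt_sq_eq_abs] at this
    exact abs_le.mp this
  have hKc : IsCompact K := by
    refine hbox.of_isClosed_subset hKcl ?_
    rintro ⟨g₁, g₂, f, h⟩ ⟨h1, h2, h3⟩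
    refine ⟨habs _ _ h1, habs _ _ ?_, habs _ _ ?_, habs _ _ h3⟩
    · nlinarith [sq_nonneg f, hσn2.le]
    · nlinarith [sq_nonneg g₂, hσn2.le]
  have hKne : K.Nonempty := ⟨(0, 0, 0, 0), by
    refine ⟨by simpa using hρ.le, by simpa using hρ.le, by simpa using hH0⟩⟩
  have hcont : ContinuousOn
      (fun p : ℝ × ℝ × ℝ × ℝ => rSNR σn2 σw2 p.1 p.2.1 p.2.2.1 p.2.2.2) K := by
    apply Continuous.continuousOn
    unfold rSNR
    have hden : ∀ p : ℝ × ℝ × ℝ × ℝ,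
        (1 + σn2 * p.2.2.1 ^ 2 + σw2 * p.2.2.2 ^ 2) ≠ 0 := by
      intro p; positivity
    exact (by fun_prop : Continuous fun p : ℝ×ℝ×ℝ×ℝ => p.1 ^ 2).add
      (Continuous.div (by fun_prop) (by fun_prop) hden)
  obtain ⟨p, hpK, hpmax⟩ := hKc.exists_isMaxOn hKne hcont
  exact ⟨p.1, p.2.1, p.2.2.1, p.2.2.2, hpK,
    fun a b c d hf => isMaxOn_iff.mp hpmax (a, b, c, d) hf⟩

lemma exists_good (ρ γ σn2 σw2 : ℝ) (hρ : 0 < ρ) (hγ : 0 < γ) (hσn2 : 0 < σn2)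
    (hσw2 : 0 < σw2) :
    ∃ g₁ g₂ f h, rMax ρ γ σn2 σw2 g₁ g₂ f h ∧ 0 < g₁ ∧ 0 < g₂ ∧ f < 0 ∧ 0 < h := by
  obtain ⟨a, b, F, H, hm⟩ := exists_rmax ρ γ σn2 σw2 hρ hγ hσn2 hσw2
  -- step 1: get f < 0 < h
  have step1 : ∃ a b F H, rMax ρ γ σn2 σw2 a b F H ∧ F < 0 ∧ 0 < H := by
    have hane : a ≠ 0 := (rmax_num_pos ρ γ σn2 σw2 hρ hγ hσn2 hσw2 a b F H hm).1
    have hFne : F ≠ 0 := rmax_f_ne ρ γ σn2 σw2 hρ hγ hσn2 hσw2 a b F H hm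
    have hHne : H ≠ 0 := rmax_h_ne ρ γ σn2 σw2 hρ hγ hσn2 hσw2 a b F H hm
    have hFH : F * H < 0 := rmax_fh_neg ρ γ σn2 σw2 hσn2 hσw2 a b F H hm hane hFne hHne
    rcases lt_or_gt_of_ne hFne with hF | hF
    · refine ⟨a, b, F, H, hm, hF, ?_⟩
      rcases lt_or_gt_of_ne hHne with hH | hH
      · nlinarith
      · exact hH
    · refine ⟨a, -b, -F, -H, (rmax_flip_sign ρ γ σn2 σw2 a b F H hm).2, by linarith, ?_⟩
      rcases lt_or_gt_of_ne hHne with hH | hH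
      · linarith
      · nlinarith
  obtain ⟨a, b, F, H, hm, hF, hH⟩ := step1
  -- step 2: get 0 < a
  have step2 : ∃ a b, rMax ρ γ σn2 σw2 a b F H ∧ 0 < a := by
    have hane : a ≠ 0 := (rmax_num_pos ρ γ σn2 σw2 hρ hγ hσn2 hσw2 a b F H hm).1
    rcases lt_or_gt_of_ne hane with ha | ha
    · exact ⟨-a, -b, (rmax_flip_sign ρ γ σn2 σw2 a b F H hm).1, by linarith⟩
    · exact ⟨a, b, hm, ha⟩
  obtain ⟨a, b, hm, ha⟩ := step2
  -- step 3: 0 < b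
  have hbne : b ≠ 0 := rmax_g2_ne ρ γ σn2 σw2 hρ hγ hσn2 hσw2 a b F H hm
  have hflip := (rmax_flips ρ γ σn2 σw2 hσn2 hσw2 a b F H hm).2.2
  have haHF : 0 < a * (H - F) := mul_pos ha (by linarith)
  have hb : 0 < b := by
    rcases lt_or_gt_of_ne hbne with hbneg | hbpos
    · exfalso
      have := mul_neg_of_pos_of_neg haHF hbneg
      linarith
    · exact hbpos
  exact ⟨a, b, F, H, hm, ha, hb, hF, hH⟩

/-- Sign structure of the maximizers of the post-processed SNR of the two-transmission
three-terminal relay channel with noisy channel-output feedback: there exists a maximizer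
with `g₁ > 0, g₂ > 0, f₂₁ < 0, h₁ > 0`, and no maximizer has `g₂ = 0`, `f₂₁ = 0`,
or `h₁ = 0`. -/
theorem noisy_feedback_maximizer_signs (ρ γ σn2 σw2 : ℝ)
    (hρ : 0 < ρ) (hγ : 0 < γ) (hσn2 : 0 < σn2) (hσw2 : 0 < σw2) :
    let SNR : ℝ → ℝ → ℝ → ℝ → ℝ := fun g₁ g₂ f h =>
      g₁ ^ 2 + (g₁ * (h - f) + g₂) ^ 2 / (1 + σn2 * f ^ 2 + σw2 * h ^ 2)
    let Feas : ℝ → ℝ → ℝ → ℝ → Prop := fun g₁ g₂ f h =>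
      g₁ ^ 2 ≤ ρ ∧ g₂ ^ 2 + (1 + σn2) * f ^ 2 ≤ ρ ∧ h ^ 2 ≤ γ * ρ / (ρ + σw2)
    let IsMax : ℝ → ℝ → ℝ → ℝ → Prop := fun g₁ g₂ f h =>
      Feas g₁ g₂ f h ∧ ∀ g₁' g₂' f' h', Feas g₁' g₂' f' h' → SNR g₁' g₂' f' h' ≤ SNR g₁ g₂ f h
    (∃ g₁ g₂ f h : ℝ, IsMax g₁ g₂ f h ∧ 0 < g₁ ∧ 0 < g₂ ∧ f < 0 ∧ 0 < h)
      ∧ (∀ g₁ g₂ f h : ℝ, IsMax g₁ g₂ f h → g₂ ≠ 0 ∧ f ≠ 0 ∧ h ≠ 0) := by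
  intro SNR Feas IsMax
  have hIsMax : ∀ g₁ g₂ f h : ℝ, IsMax g₁ g₂ f h ↔ rMax ρ γ σn2 σw2 g₁ g₂ f h := by
    intro g₁ g₂ f h
    constructor
    · intro hm; exact ⟨hm.1, hm.2⟩
    · intro hm; exact ⟨hm.1, hm.2⟩
  constructor
  · obtain ⟨a, b, F, H, hm, ha, hb, hF, hH⟩ := exists_good ρ γ σn2 σw2 hρ hγ hσn2 hσw2
    exact ⟨a, b, F, H, (hIsMax a b F H).mpr hm, ha, hb, hF, hH⟩
  · intro g₁ g₂ f h hm
    have hm' := (hIsMax g₁ g₂ f h).mp hm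
    exact ⟨rmax_g2_ne ρ γ σn2 σw2 hρ hγ hσn2 hσw2 g₁ g₂ f h hm',
      rmax_f_ne ρ γ σn2 σw2 hρ hγ hσn2 hσw2 g₁ g₂ f h hm',
      rmax_h_ne ρ γ σn2 σw2 hρ hγ hσn2 hσw2 g₁ g₂ f h hm'⟩
end

section
/- For fixed h₁ ≥ 0 with 1 + σ_w² h₁² + σ_n² f h₁ > 0 on the domain of interest, the function Φ(f) = (1/ρ)·((σ_n² ρ + (1+σ_n²)(1+σ_w² h₁²)) / (1 + σ_w² h₁² + σ_n² f h₁))²·f² + (1+σ_n²) f², restricted to f ≤ 0, is strictly decreasing in f (i.e., strictly increasing in −f); consequently the equation Φ(f) = ρ has a unique solution f_{21} ≤ 0 in the region {f ≤ 0 : 1 + σ_w² h₁² + σ_n² f h₁ > 0}. -/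
/-!
With `a = 1 + σ_w² h₁²`, `b = σ_n² h₁ ≥ 0` and `c = σ_n² ρ + (1 + σ_n²)(1 + σ_w² h₁²)`,
`Φ(f) = c² (f / (a + b f))² / ρ + (1 + σ_n²) f²`. On `f ≤ 0, a + b f > 0` the map
`f ↦ f / (a + b f)` is nonpositive and monotone, so the first term is antitone and the second
strictly antitone. For existence, at `f₀ = -ρ a / (c + ρ b)` one has `c (-f₀) / (a + b f₀) = ρ`,
so the first term alone equals `ρ`; as `Φ(0) = 0`, the intermediate value theorem on `[f₀, 0]`
gives a solution.
-/

noncomputable section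

variable {ρ a b c d : ℝ}

def gainRegion (a b : ℝ) : Set ℝ := {f | f ≤ 0 ∧ 0 < a + b * f}

def phi (ρ a b c d f : ℝ) : ℝ := (1 / ρ) * (c / (a + b * f)) ^ 2 * f ^ 2 + d * f ^ 2

theorem strictAntiOn_sq_Iic : StrictAntiOn (fun f : ℝ => f ^ 2) (Set.Iic 0) :=
  fun _ hx _ hy hxy => by simp only [Set.mem_Iic] at hx hy; nlinarith

theorem Icc_subset_gainRegion (hb : 0 ≤ b) {x : ℝ} (hx : x ∈ gainRegion a b) :
    Set.Icc x 0 ⊆ gainRegion a b :=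
  fun _ hy => ⟨hy.2, by nlinarith [hx.2, hy.1]⟩

theorem monotoneOn_div_gainRegion (hb : 0 ≤ b) :
    MonotoneOn (fun f => f / (a + b * f)) (gainRegion a b) := by
  rintro f₁ ⟨-, hd₁⟩ f₂ ⟨hf₂, hd₂⟩ hf
  have hbf : 0 ≤ -(b * f₂) * (f₂ - f₁) :=
    mul_nonneg (neg_nonneg.2 (mul_nonpos_of_nonneg_of_nonpos hb hf₂)) (sub_nonneg.2 hf)
  rw [div_le_div_iff₀ hd₁ hd₂]
  nlinarith [mul_nonneg hd₂.le (sub_nonneg.2 hf)]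

theorem antitoneOn_sq_div_mul_sq (hb : 0 ≤ b) (c : ℝ) :
    AntitoneOn (fun f => (c / (a + b * f)) ^ 2 * f ^ 2) (gainRegion a b) := by
  intro f₁ hf₁ f₂ hf₂ hf
  have hmono := monotoneOn_div_gainRegion hb hf₁ hf₂ hf
  have hnonpos : f₂ / (a + b * f₂) ≤ 0 := div_nonpos_of_nonpos_of_nonneg hf₂.1 hf₂.2.le
  have hsq : (f₂ / (a + b * f₂)) ^ 2 ≤ (f₁ / (a + b * f₁)) ^ 2 := by nlinarith
  calc (c / (a + b * f₂)) ^ 2 * f₂ ^ 2 = c ^ 2 * (f₂ / (a + b * f₂)) ^ 2 := by ring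
    _ ≤ c ^ 2 * (f₁ / (a + b * f₁)) ^ 2 := by gcongr
    _ = (c / (a + b * f₁)) ^ 2 * f₁ ^ 2 := by ring

theorem strictAntiOn_phi (hρ : 0 ≤ ρ) (hb : 0 ≤ b) (hd : 0 < d) :
    StrictAntiOn (phi ρ a b c d) (gainRegion a b) := by
  have hfirst : AntitoneOn (fun f => (1 / ρ) * (c / (a + b * f)) ^ 2 * f ^ 2) (gainRegion a b) :=
    fun f₁ hf₁ f₂ hf₂ hf => by
      simp only [mul_assoc]
      exact mul_le_mul_of_nonneg_left (antitoneOn_sq_div_mul_sq hb c hf₁ hf₂ hf) (by positivity)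
  have hsecond : StrictAntiOn (fun f => d * f ^ 2) (gainRegion a b) :=
    fun f₁ hf₁ f₂ hf₂ hf => mul_lt_mul_of_pos_left (strictAntiOn_sq_Iic hf₁.1 hf₂.1 hf) hd
  exact hfirst.add_strictAnti hsecond

theorem continuousOn_phi : ContinuousOn (phi ρ a b c d) (gainRegion a b) := by
  have hden : ∀ f ∈ gainRegion a b, a + b * f ≠ 0 := fun f hf => hf.2.ne'
  unfold phi
  fun_prop (disch := assumption)

theorem add_mul_neg_div (hcρb : c + ρ * b ≠ 0) :
    a + b * (-(ρ * a) / (c + ρ * b)) = a * c / (c + ρ * b) := by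
  rw [eq_div_iff hcρb, add_mul, mul_assoc, div_mul_cancel₀ _ hcρb]
  ring

theorem phi_neg_div (hρ : ρ ≠ 0) (ha : a ≠ 0) (hc : c ≠ 0) (hcρb : c + ρ * b ≠ 0) :
    phi ρ a b c d (-(ρ * a) / (c + ρ * b)) = ρ + d * (-(ρ * a) / (c + ρ * b)) ^ 2 := by
  rw [phi, add_mul_neg_div hcρb]
  field_simp

theorem exists_mem_gainRegion_phi_eq (hρ : 0 < ρ) (ha : 0 < a) (hb : 0 ≤ b) (hc : 0 < c)
    (hd : 0 ≤ d) : ∃ f ∈ gainRegion a b, phi ρ a b c d f = ρ := by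
  have hcρb : 0 < c + ρ * b := by positivity
  set f₀ := -(ρ * a) / (c + ρ * b) with hf₀_def
  have hf₀ : f₀ ∈ gainRegion a b := by
    refine ⟨div_nonpos_of_nonpos_of_nonneg (by nlinarith) hcρb.le, ?_⟩
    rw [hf₀_def, add_mul_neg_div hcρb.ne']
    positivity
  have hsub := Icc_subset_gainRegion hb hf₀
  have hρ_mem : ρ ∈ Set.Icc (phi ρ a b c d 0) (phi ρ a b c d f₀) := by
    refine ⟨by simpa [phi] using hρ.le, ?_⟩
    rw [phi_neg_div hρ.ne' ha.ne' hc.ne' hcρb.ne']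
    nlinarith [sq_nonneg f₀]
  obtain ⟨f, hf, hphi⟩ := intermediate_value_Icc' hf₀.1 (continuousOn_phi.mono hsub) hρ_mem
  exact ⟨f, hsub hf, hphi⟩

theorem existsUnique_mem_gainRegion_phi_eq (hρ : 0 < ρ) (ha : 0 < a) (hb : 0 ≤ b) (hc : 0 < c)
    (hd : 0 < d) : ∃! f, f ∈ gainRegion a b ∧ phi ρ a b c d f = ρ := by
  obtain ⟨f, hf, hphi⟩ := exists_mem_gainRegion_phi_eq hρ ha hb hc hd.le
  exact ⟨f, ⟨hf, hphi⟩, fun g ⟨hg, hphig⟩ =>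
    (strictAntiOn_phi hρ.le hb hd).injOn hg hf (hphig.trans hphi.symm)⟩

end

/-- Uniqueness of the feedback gain `f₂₁`: for fixed relay tap `h₁ ≥ 0`, the function
`Φ(f) = (1/ρ)((σ_n² ρ + (1+σ_n²)(1+σ_w² h₁²)) / (1 + σ_w² h₁² + σ_n² f h₁))² f²
+ (1+σ_n²) f²`, restricted to the region `{f ≤ 0 : 1 + σ_w² h₁² + σ_n² f h₁ > 0}`,
is strictly decreasing in `f`; consequently `Φ(f) = ρ` has a unique solution there. -/
theorem f21_equation_unique_solution (ρ σn2 σw2 h₁ : ℝ)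
    (hρ : 0 < ρ) (hσn2 : 0 < σn2) (hσw2 : 0 ≤ σw2) (hh : 0 ≤ h₁) :
    let Φ : ℝ → ℝ := fun f =>
      (1 / ρ) * ((σn2 * ρ + (1 + σn2) * (1 + σw2 * h₁ ^ 2))
          / (1 + σw2 * h₁ ^ 2 + σn2 * f * h₁)) ^ 2 * f ^ 2
        + (1 + σn2) * f ^ 2
    let S : Set ℝ := {f : ℝ | f ≤ 0 ∧ 0 < 1 + σw2 * h₁ ^ 2 + σn2 * f * h₁}
    StrictAntiOn Φ S ∧ ∃! f : ℝ, f ∈ S ∧ Φ f = ρ := by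
  intro Φ S
  have hΦ : Φ = phi ρ (1 + σw2 * h₁ ^ 2) (σn2 * h₁)
      (σn2 * ρ + (1 + σn2) * (1 + σw2 * h₁ ^ 2)) (1 + σn2) := by
    funext f
    simp only [Φ, phi]
    ring
  have hS : S = gainRegion (1 + σw2 * h₁ ^ 2) (σn2 * h₁) := by
    ext f
    simp only [S, gainRegion, Set.mem_ofPred_eq]
    ring_nf
  have hA : 0 < 1 + σw2 * h₁ ^ 2 := by positivity
  have hB : 0 ≤ σn2 * h₁ := by positivity
  have hd : (0 : ℝ) < 1 + σn2 := by linarith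
  rw [hΦ, hS]
  exact ⟨strictAntiOn_phi hρ.le hB hd,
    existsUnique_mem_gainRegion_phi_eq hρ hA hB (by positivity) hd⟩
end
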